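/- For all n, r ≥ 0, the r-Bell numbers satisfy B_{n,r} = Σ_{i=0}^{n} r^i · C(n,i) · B_{n−i}, where B_{n,r} = Σ_{k=0}^{n} S_r(n,k) is the sum of r-Stirling numbers of the second kind and B_n = B_{n,0} is the ordinary Bell number. -/

import Mathlib

open Finset

/-- The r-Stirling numbers of the second kind `S_r(n,k)`. -/
def rStirling2 (r : ℕ) : ℕ → ℕ → ℕ
  | 0, 0 => 1
  | 0, _ + 1 => 0
  | n + 1, 0 => r * rStirling2 r n 0
  | n + 1, k + 1 => rStirling2 r n k + (k + 1 + r) * rStirling2 r n (k + 1)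

/-- The r-Bell numbers `B_{n,r}`. -/
def rBell (n r : ℕ) : ℕ := ∑ k ∈ range (n + 1), rStirling2 r n k

/-!
Read the rows `k ↦ S_r(n,k)` as vectors. The recurrence says that row `n + 1` is obtained from
row `n` by the operator `L + r`, where `L v k = v (k - 1) + k v k` (`stirlingStep`) does not
depend on `r`. Hence row `n` of `S_r` is `(L + r)ⁿ e₀`, and since the scalar `r` commutes with `L`
the binomial theorem gives `S_r(n,k) = ∑ᵢ C(n,i) rⁱ S_0(n-i,k)`. Summing over `k` yields the
theorem, because `S_r(n,k)` vanishes for `k > n`.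
-/

def stirlingStep : Module.End ℕ (ℕ → ℕ) where
  toFun v
    | 0 => 0
    | k + 1 => v k + (k + 1) * v (k + 1)
  map_add' v w := by
    ext (_ | k)
    · simp only [Pi.add_apply]
    · simp only [Pi.add_apply]; ring
  map_smul' c v := by
    ext (_ | k)
    · simp only [Pi.smul_apply, smul_eq_mul, mul_zero]
    · simp only [Pi.smul_apply, smul_eq_mul, RingHom.id_apply]; ring

lemma rStirling2_zero (r : ℕ) : rStirling2 r 0 = Pi.single 0 1 := by
  funext k
  cases k <;> rfl

lemma rStirling2_succ (r n : ℕ) :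
    rStirling2 r (n + 1) = (stirlingStep + (r : Module.End ℕ (ℕ → ℕ))) (rStirling2 r n) := by
  funext k
  cases k <;>
    simp only [rStirling2, stirlingStep, LinearMap.add_apply, Module.End.natCast_apply,
      LinearMap.coe_mk, AddHom.coe_mk, Pi.add_apply, Pi.smul_apply, smul_eq_mul] <;>
    ring

lemma rStirling2_eq_pow_apply (r n : ℕ) :
    rStirling2 r n = ((stirlingStep + (r : Module.End ℕ (ℕ → ℕ))) ^ n) (Pi.single 0 1) := by
  induction n with
  | zero => exact rStirling2_zero r
  | succ n ih => rw [rStirling2_succ, ih, pow_succ', Module.End.mul_apply]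

lemma rStirling2_eq_sum_choose_mul (r n k : ℕ) :
    rStirling2 r n k = ∑ i ∈ range (n + 1), r ^ i * n.choose i * rStirling2 0 (n - i) k := by
  rw [rStirling2_eq_pow_apply, add_comm, (Nat.cast_commute r stirlingStep).add_pow]
  simp only [LinearMap.sum_apply, Finset.sum_apply, rStirling2_eq_pow_apply 0, Nat.cast_zero,
    add_zero, ← Nat.cast_pow, Module.End.mul_apply, Module.End.natCast_apply, map_nsmul,
    Pi.smul_apply, smul_eq_mul]
  refine sum_congr rfl fun i _ => ?_
  ring

lemma rStirling2_eq_zero_of_lt (r : ℕ) {n k : ℕ} (h : n < k) : rStirling2 r n k = 0 := by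
  induction n generalizing k with
  | zero => obtain ⟨k, rfl⟩ := Nat.exists_eq_add_one_of_ne_zero h.ne'; rfl
  | succ n ih =>
    obtain ⟨k, rfl⟩ := Nat.exists_eq_add_one_of_ne_zero (by omega : k ≠ 0)
    simp only [rStirling2, ih (by omega : n < k), ih (by omega : n < k + 1), mul_zero, add_zero]

lemma rBell_eq_sum_range_of_lt (r : ℕ) {n N : ℕ} (h : n < N) :
    rBell n r = ∑ k ∈ range N, rStirling2 r n k :=
  sum_subset (range_subset_range.mpr h) fun _ _ hk =>
    rStirling2_eq_zero_of_lt r (by simpa using hk)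

theorem rBell_eq_sum_bell (n r : ℕ) :
    rBell n r = ∑ i ∈ range (n + 1), r ^ i * n.choose i * rBell (n - i) 0 := by
  rw [rBell, sum_congr rfl fun k _ => rStirling2_eq_sum_choose_mul r n k, sum_comm]
  refine sum_congr rfl fun i hi => ?_
  rw [← mul_sum, rBell_eq_sum_range_of_lt 0 (by simp at hi; omega : n - i < n + 1)]
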